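/- With the root order on positive roots Δ⁺, if γ₁ = Σ c_{1α} α and γ₂ = Σ c_{2α} α have intersecting supports, then their greatest lower bound in (Δ⁺, ≼) equals Σ_{α∈Π} min(c_{1α}, c_{2α}) α; in particular this coefficientwise minimum is itself a positive root. -/

import Mathlib

open scoped RealInnerProductSpace

/-- Combinatorial data of the set of positive roots of a (reduced, irreducible,
crystallographic) root system of a simple Lie algebra, with a chosen set of
simple roots, sitting in a real inner product space `V`. -/
structure SimpleRS (V : Type*) [NormedAddCommGroup V] [InnerProductSpace ℝ V] where
  /-- the positive roots Δ⁺ -/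
  pos : Finset V
  /-- the simple roots Π -/
  simple : Finset V
  simple_sub : simple ⊆ pos
  indep : LinearIndependent ℝ (fun α : {x // x ∈ simple} => (α : V))
  root_ne : ∀ γ ∈ pos, γ ≠ (0 : V)
  /-- `coeff γ α` is the coefficient of the simple root `α` in `γ` -/
  coeff : V → V → ℕ
  coeff_spec : ∀ γ ∈ pos, γ = ∑ α ∈ simple, (coeff γ α : ℝ) • α
  /-- the reflection of a root in a root is again a root (positive or negative) -/
  reflect_mem : ∀ α ∈ pos, ∀ γ ∈ pos,
    (γ - (2 * ⟪γ, α⟫ / ⟪α, α⟫) • α ∈ pos ∨ -(γ - (2 * ⟪γ, α⟫ / ⟪α, α⟫) • α) ∈ pos)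
  crystallographic : ∀ α ∈ pos, ∀ γ ∈ pos, ∃ z : ℤ, 2 * ⟪γ, α⟫ / ⟪α, α⟫ = (z : ℝ)
  reduced : ∀ α ∈ pos, (2 : ℝ) • α ∉ pos
  /-- irreducibility: the Dynkin diagram is connected -/
  irreducible : ∀ S ⊆ simple, (∀ α ∈ S, ∀ β ∈ simple, β ∉ S → ⟪α, β⟫ = 0) →
      S = ∅ ∨ S = simple
  /-- the highest root θ -/
  highest : V
  highest_mem : highest ∈ pos
  highest_spec : ∀ γ ∈ pos, ∃ c : V → ℕ, highest - γ = ∑ α ∈ simple, (c α : ℝ) • α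

namespace SimpleRS

variable {V : Type*} [NormedAddCommGroup V] [InnerProductSpace ℝ V] (R : SimpleRS V)

/-- the root order: `μ ≼ ν` iff `ν − μ` is a nonnegative integral combination
of simple roots -/
def rle (μ ν : V) : Prop := ∃ c : V → ℕ, ν - μ = ∑ α ∈ R.simple, (c α : ℝ) • α

/-- the support of a root: simple roots occurring with nonzero coefficient -/
def supp (γ : V) : Set V := {α | α ∈ R.simple ∧ R.coeff γ α ≠ 0}

/-- the height of a root -/
def ht (γ : V) : ℕ := ∑ α ∈ R.simple, R.coeff γ α

/-- the root system is of type `A_n`: its Dynkin diagram is a simply laced chain -/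
def IsTypeA : Prop :=
  ∃ (n : ℕ) (e : Fin n ≃ {x // x ∈ R.simple}),
    (∀ i j : Fin n, ⟪(e i : V), (e j : V)⟫ ≠ 0 ↔ ((i : ℤ) - (j : ℤ)).natAbs ≤ 1) ∧
    (∀ i j : Fin n, ‖(e i : V)‖ = ‖(e j : V)‖)

/-- all roots have the same length -/
def SimplyLaced : Prop := ∀ α ∈ R.pos, ∀ β ∈ R.pos, ‖α‖ = ‖β‖

/-- a positive root `γ` is commutative if the upper ideal it generates is abelian,
i.e. no two of its elements sum to a root -/
def IsCom (γ : V) : Prop :=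
  ∀ ν₁ ∈ R.pos, ∀ ν₂ ∈ R.pos, R.rle γ ν₁ → R.rle γ ν₂ →
    ν₁ + ν₂ ∉ R.pos ∧ -(ν₁ + ν₂) ∉ R.pos

/-- the coefficientwise floor `⌊θ/2⌋` of half the highest root -/
def floorTheta : V := ∑ α ∈ R.simple, ((R.coeff R.highest α / 2 : ℕ) : ℝ) • α

end SimpleRS

/-!
Descent on the heights. If `γ₁` and `γ₂` are comparable, their coefficientwise minimum is the
smaller one. Otherwise one of them, say `γ₁`, makes an acute angle with a simple root `α` in which
it exceeds `γ₂`; then `γ₁ - α` is again a root, of smaller height, with the same minimum against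
`γ₂`. That the minimum is the greatest lower bound is then read off coefficientwise.
-/

lemma real_inner_add_add_eq {V : Type*} [NormedAddCommGroup V] [InnerProductSpace ℝ V]
    (μ a b : V) :
    ⟪μ + a, μ + b⟫ = ⟪μ + a + b, μ + a + b⟫ - ⟪μ + a, a⟫ - ⟪μ + b, b⟫ - ⟪a, b⟫ := by
  simp only [inner_add_left, inner_add_right, real_inner_comm a μ, real_inner_comm b μ,
    real_inner_comm b a]
  ring

namespace SimpleRS

variable {V : Type*} [NormedAddCommGroup V] [InnerProductSpace ℝ V] (R : SimpleRS V)

def meet (γ₁ γ₂ : V) : V :=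
  ∑ α ∈ R.simple, ((min (R.coeff γ₁ α) (R.coeff γ₂ α) : ℕ) : ℝ) • α

lemma meet_comm (γ₁ γ₂ : V) : R.meet γ₁ γ₂ = R.meet γ₂ γ₁ := by
  simp only [meet, min_comm]

lemma eq_of_sum_smul_eq {f g : V → ℝ}
    (h : ∑ α ∈ R.simple, f α • α = ∑ α ∈ R.simple, g α • α) :
    ∀ α ∈ R.simple, f α = g α := by
  have h' : ∑ α : R.simple, (f α - g α) • (α : V) = 0 := by
    simp only [sub_smul, Finset.sum_sub_distrib]
    rw [Finset.sum_coe_sort R.simple (fun α => f α • α),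
      Finset.sum_coe_sort R.simple (fun α => g α • α), h, sub_self]
  intro α hα
  exact sub_eq_zero.mp
    (linearIndependent_iff'.mp R.indep _ _ h' ⟨α, hα⟩ (Finset.mem_univ _))

lemma sum_smul_ne_zero {f : V → ℝ} {α : V} (hα : α ∈ R.simple) (hf : f α ≠ 0) :
    ∑ β ∈ R.simple, f β • β ≠ 0 := by
  intro h
  refine hf (R.eq_of_sum_smul_eq (g := 0) ?_ α hα)
  simpa using h

lemma coeff_eq_of_eq_sum {γ : V} (hγ : γ ∈ R.pos) {f : V → ℝ}
    (h : γ = ∑ α ∈ R.simple, f α • α) : ∀ α ∈ R.simple, (R.coeff γ α : ℝ) = f α :=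
  R.eq_of_sum_smul_eq ((R.coeff_spec γ hγ).symm.trans h)

lemma coeff_add {γ δ : V} (hγ : γ ∈ R.pos) (hδ : δ ∈ R.pos) (hγδ : γ + δ ∈ R.pos) :
    ∀ α ∈ R.simple, R.coeff (γ + δ) α = R.coeff γ α + R.coeff δ α := by
  intro α hα
  have h : γ + δ = ∑ β ∈ R.simple, ((R.coeff γ β : ℝ) + R.coeff δ β) • β := by
    simp only [add_smul, Finset.sum_add_distrib, ← R.coeff_spec γ hγ, ← R.coeff_spec δ hδ]
  exact_mod_cast R.coeff_eq_of_eq_sum hγδ h α hα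

open scoped Classical in
lemma coeff_simple {α : V} (hα : α ∈ R.simple) :
    ∀ β ∈ R.simple, R.coeff α β = if β = α then 1 else 0 := by
  intro β hβ
  have h : α = ∑ β ∈ R.simple, (if β = α then (1 : ℝ) else 0) • β := by
    simp [ite_smul, hα]
  have := R.coeff_eq_of_eq_sum (R.simple_sub hα) h β hβ
  split_ifs at this ⊢ <;> exact_mod_cast this

lemma exists_coeff_ne_zero {γ : V} (hγ : γ ∈ R.pos) : ∃ α ∈ R.simple, R.coeff γ α ≠ 0 := by
  by_contra! h
  apply R.root_ne γ hγ
  rw [R.coeff_spec γ hγ]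
  exact Finset.sum_eq_zero fun α hα => by simp [h α hα]

lemma ht_pos {γ : V} (hγ : γ ∈ R.pos) : 0 < R.ht γ := by
  obtain ⟨α, hα, hne⟩ := R.exists_coeff_ne_zero hγ
  exact (Nat.pos_of_ne_zero hne).trans_le (Finset.single_le_sum (fun _ _ => Nat.zero_le _) hα)

lemma ht_simple {α : V} (hα : α ∈ R.simple) : R.ht α = 1 := by
  classical
  rw [ht, Finset.sum_congr rfl (R.coeff_simple hα), Finset.sum_ite_eq' R.simple α, if_pos hα]

lemma ht_add {γ δ : V} (hγ : γ ∈ R.pos) (hδ : δ ∈ R.pos) (hγδ : γ + δ ∈ R.pos) :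
    R.ht (γ + δ) = R.ht γ + R.ht δ := by
  rw [ht, Finset.sum_congr rfl (R.coeff_add hγ hδ hγδ), Finset.sum_add_distrib, ht, ht]

lemma simple_sub_not_mem_pos {α γ : V} (hα : α ∈ R.simple) (hγ : γ ∈ R.pos) :
    α - γ ∉ R.pos := by
  intro h
  have hsum : γ + (α - γ) = α := add_sub_cancel γ α
  have := R.ht_add hγ h (by rw [hsum]; exact R.simple_sub hα)
  rw [hsum, R.ht_simple hα] at this
  have := R.ht_pos hγ
  have := R.ht_pos h
  omega

lemma eq_one_of_smul_mem_pos {x : V} {t : ℝ} (hx : x ∈ R.pos) (htx : t • x ∈ R.pos)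
    (ht : 0 < t) : t = 1 := by
  -- `2 t` and `2 / t` are integers with product `4`; reducedness excludes `t = 1/2` and `t = 2`.
  have hxx : 0 < ⟪x, x⟫ := real_inner_self_pos.mpr (R.root_ne x hx)
  obtain ⟨a, ha⟩ := R.crystallographic x hx (t • x) htx
  obtain ⟨b, hb⟩ := R.crystallographic (t • x) htx x hx
  simp only [real_inner_smul_left, real_inner_smul_right] at ha hb
  have ha' : (a : ℝ) = 2 * t := by rw [← ha]; field_simp
  have hb' : (b : ℝ) = 2 / t := by rw [← hb]; field_simp
  have hab : a * b = 4 := by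
    have : (a : ℝ) * b = 4 := by rw [ha', hb']; field_simp; ring
    exact_mod_cast this
  have ha0 : 0 < a := by exact_mod_cast (ha' ▸ (by positivity : (0 : ℝ) < 2 * t))
  have hb0 : 0 < b := by exact_mod_cast (hb' ▸ (by positivity : (0 : ℝ) < 2 / t))
  have ha4 : a ≤ 4 := by nlinarith
  interval_cases a <;> push_cast at ha'
  · have : x = (2 : ℝ) • t • x := by
      rw [smul_smul, show 2 * t = 1 by exact_mod_cast ha'.symm, one_smul]
    exact absurd (this ▸ hx) (R.reduced _ htx)
  · linarith
  · omega
  · exact absurd (show t = 2 by linarith ▸ htx) (R.reduced x hx)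

lemma sub_mem_or_of_cartan_eq_one {α γ : V} (hα : α ∈ R.pos) (hγ : γ ∈ R.pos)
    (h : 2 * ⟪γ, α⟫ / ⟪α, α⟫ = 1) : γ - α ∈ R.pos ∨ α - γ ∈ R.pos := by
  have := R.reflect_mem α hα γ hγ
  rwa [h, one_smul, neg_sub] at this

/-- Two distinct roots at an acute angle differ by a root: Cauchy–Schwarz forces one of the two
Cartan integers to be `1`, and the corresponding reflection is the difference. -/
lemma sub_mem_or_of_inner_pos {x y : V} (hx : x ∈ R.pos) (hy : y ∈ R.pos) (hne : x ≠ y)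
    (hxy : 0 < ⟪x, y⟫) : x - y ∈ R.pos ∨ y - x ∈ R.pos := by
  have hxx : 0 < ⟪x, x⟫ := real_inner_self_pos.mpr (R.root_ne x hx)
  have hyy : 0 < ⟪y, y⟫ := real_inner_self_pos.mpr (R.root_ne y hy)
  obtain ⟨a, ha⟩ := R.crystallographic y hy x hx
  obtain ⟨b, hb⟩ := R.crystallographic x hx y hy
  rw [real_inner_comm] at hb
  have ha0 : (0 : ℝ) < a := ha ▸ by positivity
  have hb0 : (0 : ℝ) < b := hb ▸ by positivity
  by_cases ha1 : a = 1
  · exact R.sub_mem_or_of_cartan_eq_one hy hx (by rw [ha, ha1, Int.cast_one])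
  by_cases hb1 : b = 1
  · rw [real_inner_comm] at hb
    exact (R.sub_mem_or_of_cartan_eq_one hx hy (by rw [hb, hb1, Int.cast_one])).symm
  have ha2 : (2 : ℝ) ≤ a := by
    have : (0 : ℤ) < a := by exact_mod_cast ha0
    exact_mod_cast (by omega : (2 : ℤ) ≤ a)
  have hb2 : (2 : ℝ) ≤ b := by
    have : (0 : ℤ) < b := by exact_mod_cast hb0
    exact_mod_cast (by omega : (2 : ℤ) ≤ b)
  have hyp : ⟪y, y⟫ ≤ ⟪x, y⟫ := by rw [← ha, le_div_iff₀ hyy] at ha2; linarith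
  have hxp : ⟪x, x⟫ ≤ ⟪x, y⟫ := by rw [← hb, le_div_iff₀ hxx] at hb2; linarith
  have hcs : ⟪x, y⟫ = ‖x‖ * ‖y‖ := by
    have := real_inner_le_norm x y
    rw [real_inner_self_eq_norm_mul_norm] at hxx hyy hxp hyp
    nlinarith [norm_nonneg x, norm_nonneg y]
  obtain ⟨-, r, hr, rfl⟩ := (real_inner_div_norm_mul_norm_eq_one_iff x y).mp
    (by rw [hcs, div_self]; exact hcs ▸ hxy.ne')
  exact absurd (by rw [R.eq_one_of_smul_mem_pos hx hy hr, one_smul]) hne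

lemma sub_simple_mem_pos {γ α : V} (hγ : γ ∈ R.pos) (hα : α ∈ R.simple) (hne : γ ≠ α)
    (hγα : 0 < ⟪γ, α⟫) : γ - α ∈ R.pos :=
  (R.sub_mem_or_of_inner_pos hγ (R.simple_sub hα) hne hγα).resolve_right
    (R.simple_sub_not_mem_pos hα hγ)

lemma inner_simple_nonpos {α β : V} (hα : α ∈ R.simple) (hβ : β ∈ R.simple) (hne : α ≠ β) :
    ⟪α, β⟫ ≤ 0 := by
  by_contra! h
  rcases R.sub_mem_or_of_inner_pos (R.simple_sub hα) (R.simple_sub hβ) hne h with h' | h'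
  · exact R.simple_sub_not_mem_pos hα (R.simple_sub hβ) h'
  · exact R.simple_sub_not_mem_pos hβ (R.simple_sub hα) h'

lemma rle_refl (γ : V) : R.rle γ γ := ⟨0, by simp⟩

lemma rle_of_sub_mem_pos {κ γ : V} (h : γ - κ ∈ R.pos) : R.rle κ γ :=
  ⟨R.coeff (γ - κ), R.coeff_spec _ h⟩

lemma rle_iff_coeff_le {κ γ : V} (hκ : κ ∈ R.pos) (hγ : γ ∈ R.pos) :
    R.rle κ γ ↔ ∀ α ∈ R.simple, R.coeff κ α ≤ R.coeff γ α := by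
  constructor
  · rintro ⟨c, hc⟩ α hα
    have h : γ = ∑ β ∈ R.simple, ((R.coeff κ β : ℝ) + c β) • β := by
      simp only [add_smul, Finset.sum_add_distrib, ← R.coeff_spec κ hκ, ← hc, add_sub_cancel]
    have := R.coeff_eq_of_eq_sum hγ h α hα
    exact_mod_cast this ▸ le_add_of_nonneg_right (Nat.cast_nonneg (c α))
  · intro h
    refine ⟨fun α => R.coeff γ α - R.coeff κ α, ?_⟩
    calc γ - κ = ∑ α ∈ R.simple, ((R.coeff γ α : ℝ) - R.coeff κ α) • α := by
          simp only [sub_smul, Finset.sum_sub_distrib, ← R.coeff_spec γ hγ, ← R.coeff_spec κ hκ]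
      _ = _ := Finset.sum_congr rfl fun α hα => by rw [Nat.cast_sub (h α hα)]

lemma inner_nonpos_of_not_rle {γ₁ γ₂ : V} (h₁ : γ₁ ∈ R.pos) (h₂ : γ₂ ∈ R.pos)
    (h₁₂ : ¬ R.rle γ₁ γ₂) (h₂₁ : ¬ R.rle γ₂ γ₁) : ⟪γ₁, γ₂⟫ ≤ 0 := by
  by_contra! h
  have hne : γ₁ ≠ γ₂ := by rintro rfl; exact h₁₂ (R.rle_refl γ₁)
  rcases R.sub_mem_or_of_inner_pos h₁ h₂ hne h with h' | h'
  · exact h₂₁ (R.rle_of_sub_mem_pos h')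
  · exact h₁₂ (R.rle_of_sub_mem_pos h')

lemma inner_sum_smul_nonpos_of_disjoint {f g : V → ℝ} (hf : ∀ α ∈ R.simple, 0 ≤ f α)
    (hg : ∀ α ∈ R.simple, 0 ≤ g α) (hfg : ∀ α ∈ R.simple, f α * g α = 0) :
    ⟪∑ α ∈ R.simple, f α • α, ∑ β ∈ R.simple, g β • β⟫ ≤ 0 := by
  simp only [sum_inner, inner_sum, real_inner_smul_left, real_inner_smul_right]
  refine Finset.sum_nonpos fun β hβ => Finset.sum_nonpos fun α hα => ?_
  rcases eq_or_ne α β with rfl | hne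
  · rw [← mul_assoc, mul_comm (g α), hfg α hα, zero_mul]
  · exact mul_nonpos_of_nonneg_of_nonpos (hg β hβ)
      (mul_nonpos_of_nonneg_of_nonpos (hf α hα) (R.inner_simple_nonpos hα hβ hne))

/-- If neither alternative held, then writing `γ₁ = μ + a`, `γ₂ = μ + b` with `μ` the meet and
`a`, `b` nonnegative combinations of disjoint sets of simple roots would give
`⟪γ₁, γ₂⟫ ≥ ‖γ₁ + b‖² > 0`, whereas incomparable roots make an obtuse angle. -/
lemma exists_inner_simple_pos_of_not_rle {γ₁ γ₂ : V} (h₁ : γ₁ ∈ R.pos) (h₂ : γ₂ ∈ R.pos)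
    (h₁₂ : ¬ R.rle γ₁ γ₂) (h₂₁ : ¬ R.rle γ₂ γ₁) :
    (∃ α ∈ R.simple, R.coeff γ₂ α < R.coeff γ₁ α ∧ 0 < ⟪γ₁, α⟫) ∨
      (∃ α ∈ R.simple, R.coeff γ₁ α < R.coeff γ₂ α ∧ 0 < ⟪γ₂, α⟫) := by
  by_contra! h
  obtain ⟨hc₁, hc₂⟩ := h
  set f : V → ℝ := fun α => R.coeff γ₁ α - (min (R.coeff γ₁ α) (R.coeff γ₂ α) : ℕ)
  set g : V → ℝ := fun α => R.coeff γ₂ α - (min (R.coeff γ₁ α) (R.coeff γ₂ α) : ℕ)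
  have hf : ∀ α, 0 ≤ f α := fun α => sub_nonneg.mpr (by exact_mod_cast min_le_left _ _)
  have hg : ∀ α, 0 ≤ g α := fun α => sub_nonneg.mpr (by exact_mod_cast min_le_right _ _)
  set a := ∑ α ∈ R.simple, f α • α
  set b := ∑ α ∈ R.simple, g α • α
  have ha : R.meet γ₁ γ₂ + a = γ₁ := by
    simp only [a, f, meet, sub_smul, Finset.sum_sub_distrib, ← R.coeff_spec γ₁ h₁]
    abel
  have hb : R.meet γ₁ γ₂ + b = γ₂ := by
    simp only [b, g, meet, sub_smul, Finset.sum_sub_distrib, ← R.coeff_spec γ₂ h₂]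
    abel
  have h₁a : ⟪γ₁, a⟫ ≤ 0 := by
    simp only [a, inner_sum, real_inner_smul_right]
    refine Finset.sum_nonpos fun α hα => ?_
    rcases lt_or_ge (R.coeff γ₂ α) (R.coeff γ₁ α) with hlt | hle
    · exact mul_nonpos_of_nonneg_of_nonpos (hf α) (hc₁ α hα hlt)
    · simp only [f, min_eq_left hle, sub_self, zero_mul, le_refl]
  have h₂b : ⟪γ₂, b⟫ ≤ 0 := by
    simp only [b, inner_sum, real_inner_smul_right]
    refine Finset.sum_nonpos fun α hα => ?_
    rcases lt_or_ge (R.coeff γ₁ α) (R.coeff γ₂ α) with hlt | hle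
    · exact mul_nonpos_of_nonneg_of_nonpos (hg α) (hc₂ α hα hlt)
    · simp only [g, min_eq_right hle, sub_self, zero_mul, le_refl]
  have hab : ⟪a, b⟫ ≤ 0 := by
    refine R.inner_sum_smul_nonpos_of_disjoint (fun α _ => hf α) (fun α _ => hg α)
      fun α _ => ?_
    rcases le_total (R.coeff γ₁ α) (R.coeff γ₂ α) with hle | hle
    · simp only [f, min_eq_left hle, sub_self, zero_mul]
    · simp only [g, min_eq_right hle, sub_self, mul_zero]
  have hν : γ₁ + b ≠ 0 := by
    obtain ⟨α, hα, hne⟩ := R.exists_coeff_ne_zero h₁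
    have hexp : γ₁ + b = ∑ β ∈ R.simple, ((R.coeff γ₁ β : ℝ) + g β) • β := by
      simp only [b, add_smul, Finset.sum_add_distrib, ← R.coeff_spec γ₁ h₁]
    rw [hexp]
    refine R.sum_smul_ne_zero hα (add_pos_of_pos_of_nonneg ?_ (hg α)).ne'
    exact_mod_cast Nat.pos_of_ne_zero hne
  have hγ := real_inner_add_add_eq (R.meet γ₁ γ₂) a b
  rw [ha, hb] at hγ
  have := real_inner_self_pos.mpr hν
  linarith [R.inner_nonpos_of_not_rle h₁ h₂ h₁₂ h₂₁]

lemma ht_sub_simple_lt {γ α : V} (hγ : γ ∈ R.pos) (hα : α ∈ R.simple) (h : γ - α ∈ R.pos) :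
    R.ht (γ - α) < R.ht γ := by
  have := R.ht_add h (R.simple_sub hα) (by rwa [sub_add_cancel])
  rw [sub_add_cancel, R.ht_simple hα] at this
  omega

lemma meet_eq_left {γ₁ γ₂ : V} (h₁ : γ₁ ∈ R.pos)
    (h : ∀ α ∈ R.simple, R.coeff γ₁ α ≤ R.coeff γ₂ α) : R.meet γ₁ γ₂ = γ₁ := by
  conv_rhs => rw [R.coeff_spec γ₁ h₁]
  exact Finset.sum_congr rfl fun α hα => by rw [min_eq_left (h α hα)]

lemma sub_simple_mem_pos_and_meet_eq {γ₁ γ₂ α : V} (h₁ : γ₁ ∈ R.pos) (hα : α ∈ R.simple)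
    (hlt : R.coeff γ₂ α < R.coeff γ₁ α) (hpos : 0 < ⟪γ₁, α⟫) (hμ : R.meet γ₁ γ₂ ≠ 0) :
    γ₁ - α ∈ R.pos ∧ R.meet (γ₁ - α) γ₂ = R.meet γ₁ γ₂ := by
  have hne : γ₁ ≠ α := by
    rintro rfl
    have hc₂ : R.coeff γ₂ γ₁ = 0 := by rw [R.coeff_simple hα γ₁ hα, if_pos rfl] at hlt; omega
    refine hμ (Finset.sum_eq_zero fun β hβ => ?_)
    rw [R.coeff_simple hα β hβ]
    split_ifs with hβα
    · simp [hβα, hc₂]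
    · simp
  have hmem := R.sub_simple_mem_pos h₁ hα hne hpos
  refine ⟨hmem, Finset.sum_congr rfl fun β hβ => ?_⟩
  have hc := R.coeff_add hmem (R.simple_sub hα) (by rwa [sub_add_cancel]) β hβ
  rw [sub_add_cancel, R.coeff_simple hα β hβ] at hc
  split_ifs at hc with hβα
  · subst hβα
    rw [min_eq_right (by omega), min_eq_right hlt.le]
  · rw [hc, add_zero]

lemma exists_lt_meet_eq {γ₁ γ₂ : V} (h₁ : γ₁ ∈ R.pos) (h₂ : γ₂ ∈ R.pos)
    (h₁₂ : ¬ R.rle γ₁ γ₂) (h₂₁ : ¬ R.rle γ₂ γ₁) (hμ : R.meet γ₁ γ₂ ≠ 0) :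
    ∃ δ₁ ∈ R.pos, ∃ δ₂ ∈ R.pos,
      R.ht δ₁ + R.ht δ₂ < R.ht γ₁ + R.ht γ₂ ∧ R.meet δ₁ δ₂ = R.meet γ₁ γ₂ := by
  rcases R.exists_inner_simple_pos_of_not_rle h₁ h₂ h₁₂ h₂₁ with
    ⟨α, hα, hlt, hpos⟩ | ⟨α, hα, hlt, hpos⟩
  · obtain ⟨hmem, heq⟩ := R.sub_simple_mem_pos_and_meet_eq h₁ hα hlt hpos hμ
    have := R.ht_sub_simple_lt h₁ hα hmem
    exact ⟨γ₁ - α, hmem, γ₂, h₂, by omega, heq⟩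
  · rw [R.meet_comm] at hμ ⊢
    obtain ⟨hmem, heq⟩ := R.sub_simple_mem_pos_and_meet_eq h₂ hα hlt hpos hμ
    have := R.ht_sub_simple_lt h₂ hα hmem
    exact ⟨γ₁, h₁, γ₂ - α, hmem, by omega, R.meet_comm _ _ ▸ heq⟩

lemma meet_mem_pos {γ₁ γ₂ : V} (h₁ : γ₁ ∈ R.pos) (h₂ : γ₂ ∈ R.pos)
    (hμ : R.meet γ₁ γ₂ ≠ 0) : R.meet γ₁ γ₂ ∈ R.pos := by
  induction hn : R.ht γ₁ + R.ht γ₂ using Nat.strong_induction_on generalizing γ₁ γ₂ with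
  | _ n ih =>
  by_cases h₁₂ : R.rle γ₁ γ₂
  · rwa [R.meet_eq_left h₁ ((R.rle_iff_coeff_le h₁ h₂).mp h₁₂)]
  by_cases h₂₁ : R.rle γ₂ γ₁
  · rwa [R.meet_comm, R.meet_eq_left h₂ ((R.rle_iff_coeff_le h₂ h₁).mp h₂₁)]
  obtain ⟨δ₁, hδ₁, δ₂, hδ₂, hlt, heq⟩ := R.exists_lt_meet_eq h₁ h₂ h₁₂ h₂₁ hμ
  rw [← heq] at hμ ⊢
  exact ih _ (hn ▸ hlt) hδ₁ hδ₂ hμ rfl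

lemma coeff_meet {γ₁ γ₂ : V} (hμ : R.meet γ₁ γ₂ ∈ R.pos) :
    ∀ α ∈ R.simple, R.coeff (R.meet γ₁ γ₂) α = min (R.coeff γ₁ α) (R.coeff γ₂ α) := by
  intro α hα
  exact_mod_cast R.coeff_eq_of_eq_sum hμ rfl α hα

end SimpleRS

/-- if the supports of `γ₁, γ₂` intersect, then the coefficientwise
minimum `Σ min(c_{1α}, c_{2α}) α` is a positive root and is the greatest lower
bound of `γ₁` and `γ₂` in `(Δ⁺, ≼)`. -/
theorem stmt3 {V : Type*} [NormedAddCommGroup V] [InnerProductSpace ℝ V]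
    (R : SimpleRS V) {γ₁ γ₂ : V} (h1 : γ₁ ∈ R.pos) (h2 : γ₂ ∈ R.pos)
    (hsupp : (R.supp γ₁ ∩ R.supp γ₂).Nonempty) :
    (∑ α ∈ R.simple, ((min (R.coeff γ₁ α) (R.coeff γ₂ α) : ℕ) : ℝ) • α) ∈ R.pos ∧
    R.rle (∑ α ∈ R.simple, ((min (R.coeff γ₁ α) (R.coeff γ₂ α) : ℕ) : ℝ) • α) γ₁ ∧
    R.rle (∑ α ∈ R.simple, ((min (R.coeff γ₁ α) (R.coeff γ₂ α) : ℕ) : ℝ) • α) γ₂ ∧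
    ∀ κ ∈ R.pos, R.rle κ γ₁ → R.rle κ γ₂ →
      R.rle κ (∑ α ∈ R.simple, ((min (R.coeff γ₁ α) (R.coeff γ₂ α) : ℕ) : ℝ) • α) := by
  change R.meet γ₁ γ₂ ∈ R.pos ∧ R.rle (R.meet γ₁ γ₂) γ₁ ∧ R.rle (R.meet γ₁ γ₂) γ₂ ∧
    ∀ κ ∈ R.pos, R.rle κ γ₁ → R.rle κ γ₂ → R.rle κ (R.meet γ₁ γ₂)
  obtain ⟨δ, ⟨hδ, hδ₁⟩, -, hδ₂⟩ := hsupp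
  have hμ : R.meet γ₁ γ₂ ≠ 0 := R.sum_smul_ne_zero hδ <| by
    exact_mod_cast (lt_min (Nat.pos_of_ne_zero hδ₁) (Nat.pos_of_ne_zero hδ₂)).ne'
  have hmem := R.meet_mem_pos h1 h2 hμ
  have hcoeff := R.coeff_meet hmem
  refine ⟨hmem, (R.rle_iff_coeff_le hmem h1).mpr fun α hα => ?_,
    (R.rle_iff_coeff_le hmem h2).mpr fun α hα => ?_,
    fun κ hκ hκ₁ hκ₂ => (R.rle_iff_coeff_le hκ hmem).mpr fun α hα => ?_⟩
  · exact hcoeff α hα ▸ min_le_left _ _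
  · exact hcoeff α hα ▸ min_le_right _ _
  · rw [hcoeff α hα]
    exact le_min ((R.rle_iff_coeff_le hκ h1).mp hκ₁ α hα) ((R.rle_iff_coeff_le hκ h2).mp hκ₂ α hα)
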